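/- arXiv:2206.00472 — 4 statements merged into one kernel-verified Lean document; each statement's English description precedes it below -/
import Mathlib

section
/- Let G be a linearly ordered abelian group, let β_1,…,β_m be elements of G, let λ be a limit ordinal, let (γ_s)_{s<λ} be a strictly increasing family of elements of G indexed by the ordinals s < λ, and let t_1,…,t_m be integers such that β_i ≠ β_j whenever i ≠ j and t_i = t_j. Then there exists an ordinal ν < λ such that for every ordinal s with ν < s < λ the m elements β_i + t_i·γ_s (1 ≤ i ≤ m) are pairwise distinct. Moreover, if the integers t_1,…,t_m are pairwise distinct, then there exist an index r with 1 ≤ r ≤ m and an ordinal ν < λ such that β_i + t_i·γ_s > β_r + t_r·γ_s for all i ≠ r and all ordinals s with ν < s < λ. -/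
/-!
For `u < u'` the difference `(b' + u' • γ s) - (b + u • γ s) = (b' - b) + (u' - u) • γ s` is
strictly increasing in `s`, so once it is nonnegative it stays positive: every comparison between
two of the elements `β i + t i • γ s` eventually becomes a fixed strict inequality, where
"eventually" means in `𝓝[<] λ`, i.e. on some interval `(ν, λ)`. Finitely many comparisons
stabilise simultaneously, which gives the first claim. When the `t i` are distinct, the index
that is smallest at a single ordinal `s₀` beyond all the stabilisation points is the eventual
minimum, since a comparison that eventually went the other way would already fail at `s₀`.
-/

open Filter Set Topology Order

theorem Filter.exists_eventually_forall_ne_lt {α ι β : Type*} [Finite ι] [Nonempty ι]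
    [LinearOrder β] {l : Filter α} [l.NeBot] {g : ι → α → β}
    (h : ∀ i j, i ≠ j → (∀ᶠ x in l, g i x < g j x) ∨ ∀ᶠ x in l, g j x < g i x) :
    ∃ r, ∀ᶠ x in l, ∀ i, i ≠ r → g r x < g i x := by
  have hstable : ∀ᶠ x in l, ∀ i j, (∀ᶠ y in l, g i y < g j y) → g i x < g j x := by
    refine eventually_all.2 fun i => eventually_all.2 fun j => ?_
    by_cases hij : ∀ᶠ y in l, g i y < g j y
    · exact hij.mono fun _ hx _ => hx
    · exact .of_forall fun _ h => absurd h hij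
  obtain ⟨x₀, hx₀⟩ := hstable.exists
  obtain ⟨r, hr⟩ := Finite.exists_min fun i => g i x₀
  refine ⟨r, eventually_all.2 fun i => ?_⟩
  by_cases hir : i = r
  · exact .of_forall fun _ h => absurd hir h
  rcases h r i (Ne.symm hir) with hri | hir'
  · exact hri.mono fun _ hx _ => hx
  · exact absurd (hr i) (hx₀ i r hir').not_ge

section EventuallyBelow

variable {α : Type*} [LinearOrder α] [TopologicalSpace α] [OrderTopology α]

theorem nhdsLT_neBot_of_isSuccLimit {a : α} (ha : IsSuccLimit a) : (𝓝[<] a).NeBot :=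
  (nhdsLT_basis_of_exists_lt (not_isMin_iff.1 ha.not_isMin)).neBot_iff.2 fun hb =>
    (not_covBy_iff_nonempty_Ioo hb).1 (ha.isSuccPrelimit _)

theorem StrictMonoOn.eventually_gt_or_eventually_lt_nhdsLT {β : Type*} [LinearOrder β]
    {f : α → β} {a : α} (hf : StrictMonoOn f (Iio a)) (c : β) :
    (∀ᶠ x in 𝓝[<] a, c < f x) ∨ ∀ᶠ x in 𝓝[<] a, f x < c := by
  by_cases h : ∃ x₀ < a, c ≤ f x₀
  · obtain ⟨x₀, hx₀, hc⟩ := h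
    exact Or.inl (mem_of_superset (Ioo_mem_nhdsLT hx₀) fun x hx =>
      hc.trans_lt (hf hx₀ hx.2 hx.1))
  · push Not at h
    exact Or.inr (eventually_nhdsWithin_of_forall h)

variable {G : Type*} [AddCommGroup G] [LinearOrder G] [IsOrderedAddMonoid G]

theorem StrictMonoOn.eventually_lt_or_eventually_gt_add_zsmul {γ : α → G} {a : α}
    (hγ : StrictMonoOn γ (Iio a)) {b b' : G} {u u' : ℤ} (h : u ≠ u' ∨ b ≠ b') :
    (∀ᶠ x in 𝓝[<] a, b + u • γ x < b' + u' • γ x) ∨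
      ∀ᶠ x in 𝓝[<] a, b' + u' • γ x < b + u • γ x := by
  wlog huu : u ≤ u' generalizing b b' u u'
  · exact (this (h.imp Ne.symm Ne.symm) (le_of_not_ge huu)).symm
  rcases huu.lt_or_eq with hlt | rfl
  · have hmono : StrictMonoOn (fun x => (u' - u) • γ x) (Iio a) :=
      (zsmul_strictMono_right G (sub_pos.2 hlt)).comp_strictMonoOn hγ
    have key : ∀ g : G, b - b' < (u' - u) • g ↔ b + u • g < b' + u' • g := fun g => by
      rw [sub_smul, sub_lt_sub_iff, add_comm b']
    have key' : ∀ g : G, (u' - u) • g < b - b' ↔ b' + u' • g < b + u • g := fun g => by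
      rw [sub_smul, sub_lt_sub_iff, add_comm b']
    exact (hmono.eventually_gt_or_eventually_lt_nhdsLT (b - b')).imp
      (Eventually.mono · fun _ => (key _).1) (Eventually.mono · fun _ => (key' _).1)
  · rcases (h.resolve_left (not_not.2 rfl)).lt_or_gt with hb | hb
    · exact Or.inl (.of_forall fun _ => add_lt_add_left hb _)
    · exact Or.inr (.of_forall fun _ => add_lt_add_left hb _)

end EventuallyBelow

/-- Ostrowski's lemma (Lemma 1 of the paper): given elements `β i` of a linearly ordered
abelian group, integers `t i` (distinct whenever the corresponding `β`'s coincide), and a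
strictly increasing family `γ` indexed by the ordinals below a limit ordinal `lam`,
eventually the elements `β i + t i • γ s` are pairwise distinct; moreover if the `t i` are
pairwise distinct, eventually one index realizes the strict minimum. -/
theorem ostrowski_lemma {G : Type*} [AddCommGroup G] [LinearOrder G] [IsOrderedAddMonoid G]
    (m : ℕ) (β : Fin m → G) (t : Fin m → ℤ)
    (lam : Ordinal) (hlam : Order.IsSuccLimit lam)
    (γ : Ordinal → G)
    (hγ : ∀ s s' : Ordinal, s < s' → s' < lam → γ s < γ s')
    (hβ : ∀ i j : Fin m, i ≠ j → t i = t j → β i ≠ β j) :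
    (∃ ν < lam, ∀ s : Ordinal, ν < s → s < lam →
        ∀ i j : Fin m, i ≠ j → β i + t i • γ s ≠ β j + t j • γ s) ∧
      (0 < m → Function.Injective t →
        ∃ r : Fin m, ∃ ν < lam, ∀ s : Ordinal, ν < s → s < lam →
          ∀ i : Fin m, i ≠ r → β r + t r • γ s < β i + t i • γ s) := by
  have hmono : StrictMonoOn γ (Iio lam) := fun s _ s' hs' hss' => hγ s s' hss' hs'
  have hbasis := nhdsLT_basis_of_exists_lt (not_isMin_iff.1 hlam.not_isMin)
  have := nhdsLT_neBot_of_isSuccLimit hlam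
  constructor
  · have hne : ∀ᶠ s in 𝓝[<] lam, ∀ i j, i ≠ j → β i + t i • γ s ≠ β j + t j • γ s := by
      simp only [eventually_all]
      intro i j hij
      rcases hmono.eventually_lt_or_eventually_gt_add_zsmul (not_or_of_imp (hβ i j hij))
        with h | h
      exacts [h.mono fun _ => ne_of_lt, h.mono fun _ => ne_of_gt]
    obtain ⟨ν, hν, hs⟩ := hbasis.eventually_iff.1 hne
    exact ⟨ν, hν, fun s h₁ h₂ => hs ⟨h₁, h₂⟩⟩
  · intro hm ht
    have : Nonempty (Fin m) := ⟨⟨0, hm⟩⟩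
    obtain ⟨r, hr⟩ := exists_eventually_forall_ne_lt fun i j hij =>
      hmono.eventually_lt_or_eventually_gt_add_zsmul (Or.inl (ht.ne hij))
    obtain ⟨ν, hν, hs⟩ := hbasis.eventually_iff.1 hr
    exact ⟨r, ν, hν, fun s h₁ h₂ => hs ⟨h₁, h₂⟩⟩
end

section
/- Let G be a linearly ordered abelian group, let β_0, β_1, β_{0,1} be elements of G, let λ_0, λ_1 be limit ordinals, and let (γ_{0,j₀})_{j₀<λ_0} and (γ_{1,j₁})_{j₁<λ_1} be two strictly increasing families of elements ≥ 0 of G. Set P_{0,j₀} = β_0 + γ_{0,j₀}, P_{1,j₁} = β_1 + γ_{1,j₁}, and P_{0,1,j₀,j₁} = β_{0,1} + γ_{0,j₀} + γ_{1,j₁}. Then there exist ordinals ρ_0 < λ_0 and ρ_1 < λ_1, a set A of ordinals < λ_0, and a map σ : A → {ordinals < λ_1} such that the three elements P_{0,j₀}, P_{1,j₁}, P_{0,1,j₀,j₁} are pairwise distinct for all ordinals j₀, j₁ with ρ_0 < j₀ < λ_0 and ρ_1 < j₁ < λ_1 satisfying: if j₀ ∈ A then j₁ ≠ σ(j₀).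 In particular, for any ordinals ν_0 < λ_0 and ν_1 < λ_1 there exist ordinals j₀, j₁ with ν_0 < j₀ < λ_0 and ν_1 < j₁ < λ_1 such that P_{0,j₀}, P_{1,j₁}, P_{0,1,j₀,j₁} are pairwise distinct. -/
/-!
Each of the three equalities pins down one index in terms of the other: `P₀ = P₀₁` forces
`γ₁ j₁ = β₀ - β₀₁`, `P₁ = P₀₁` forces `γ₀ j₀ = β₁ - β₀₁`, and `P₀ = P₁` forces
`γ₁ j₁ = β₀ - β₁ + γ₀ j₀`. Strictly increasing families are injective, so the first two
equalities hold for at most one `j₁` (call it `ρ₁`), resp. one `j₀` (call it `ρ₀`), and the third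
for at most one `j₁ = σ j₀` per `j₀`. Below a limit ordinal there is always room to step past
`ρ₀`, `ρ₁` and avoid `σ j₀`.
-/

open Set Order

theorem Set.InjOn.exists_mem_forall_eq_of_apply_eq {α β : Type*} {f : α → β} {s : Set α}
    (hf : InjOn f s) (hs : s.Nonempty) (c : β) : ∃ ρ ∈ s, ∀ j ∈ s, f j = c → j = ρ := by
  by_cases h : ∃ ρ ∈ s, f ρ = c
  · obtain ⟨ρ, hρ, hfρ⟩ := h
    exact ⟨ρ, hρ, fun j hj hfj => hf hj hρ (hfj.trans hfρ.symm)⟩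
  · obtain ⟨a, ha⟩ := hs
    exact ⟨a, ha, fun j hj hfj => (h ⟨j, hj, hfj⟩).elim⟩

theorem Order.IsSuccPrelimit.exists_ne_of_lt {α : Type*} [LinearOrder α] {m lam : α}
    (hlam : IsSuccPrelimit lam) (hm : m < lam) (s : α) : ∃ j, m < j ∧ j < lam ∧ j ≠ s := by
  obtain ⟨c, hc, hmc⟩ := hlam.lt_iff_exists_lt.mp hm
  obtain ⟨d, hd, hcd⟩ := hlam.lt_iff_exists_lt.mp hc
  by_cases hcs : c = s
  · exact ⟨d, hmc.trans hcd, hd, hcs ▸ hcd.ne'⟩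
  · exact ⟨c, hmc, hc, hcs⟩

theorem add_ne_and_add_ne_and_add_ne {G : Type*} [AddCommGroup G] {β₀ β₁ β₀₁ x y : G}
    (hxy : y ≠ β₀ - β₁ + x) (hy : y ≠ β₀ - β₀₁) (hx : x ≠ β₁ - β₀₁) :
    β₀ + x ≠ β₁ + y ∧ β₀ + x ≠ β₀₁ + x + y ∧ β₁ + y ≠ β₀₁ + x + y := by
  refine ⟨fun h => hxy ?_, fun h => hy ?_, fun h => hx ?_⟩ <;> grind

theorem two_sequences_lemma_general {G : Type*} [AddCommGroup G] [LinearOrder G]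
    (β₀ β₁ β₀₁ : G) (lam₀ lam₁ : Ordinal) (h₀ : Order.IsSuccLimit lam₀) (h₁ : Order.IsSuccLimit lam₁)
    (γ₀ γ₁ : Ordinal → G)
    (hm₀ : ∀ j j' : Ordinal, j < j' → j' < lam₀ → γ₀ j < γ₀ j')
    (hm₁ : ∀ j j' : Ordinal, j < j' → j' < lam₁ → γ₁ j < γ₁ j') :
    (∃ ρ₀ < lam₀, ∃ ρ₁ < lam₁, ∃ (A : Set Ordinal) (σ : Ordinal → Ordinal),
      (∀ j ∈ A, j < lam₀) ∧ (∀ j ∈ A, σ j < lam₁) ∧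
      ∀ j₀, ρ₀ < j₀ → j₀ < lam₀ → ∀ j₁, ρ₁ < j₁ → j₁ < lam₁ → (j₀ ∈ A → j₁ ≠ σ j₀) →
        (β₀ + γ₀ j₀ ≠ β₁ + γ₁ j₁ ∧
          β₀ + γ₀ j₀ ≠ β₀₁ + γ₀ j₀ + γ₁ j₁ ∧
          β₁ + γ₁ j₁ ≠ β₀₁ + γ₀ j₀ + γ₁ j₁)) ∧
    (∀ ν₀, ν₀ < lam₀ → ∀ ν₁, ν₁ < lam₁ →
      ∃ j₀, ν₀ < j₀ ∧ j₀ < lam₀ ∧ ∃ j₁, ν₁ < j₁ ∧ j₁ < lam₁ ∧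
        (β₀ + γ₀ j₀ ≠ β₁ + γ₁ j₁ ∧
          β₀ + γ₀ j₀ ≠ β₀₁ + γ₀ j₀ + γ₁ j₁ ∧
          β₁ + γ₁ j₁ ≠ β₀₁ + γ₀ j₀ + γ₁ j₁)) := by
  have inj₀ : InjOn γ₀ (Iio lam₀) := StrictMonoOn.injOn fun j _ j' hj' hjj' => hm₀ j j' hjj' hj'
  have inj₁ : InjOn γ₁ (Iio lam₁) := StrictMonoOn.injOn fun j _ j' hj' hjj' => hm₁ j j' hjj' hj'
  obtain ⟨ρ₀, hρ₀, hρ₀_uniq⟩ := inj₀.exists_mem_forall_eq_of_apply_eq h₀.nonempty_Iio (β₁ - β₀₁)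
  obtain ⟨ρ₁, hρ₁, hρ₁_uniq⟩ := inj₁.exists_mem_forall_eq_of_apply_eq h₁.nonempty_Iio (β₀ - β₀₁)
  choose σ hσ hσ_uniq using fun j =>
    inj₁.exists_mem_forall_eq_of_apply_eq h₁.nonempty_Iio (β₀ - β₁ + γ₀ j)
  have distinct : ∀ j₀, ρ₀ < j₀ → j₀ < lam₀ → ∀ j₁, ρ₁ < j₁ → j₁ < lam₁ → j₁ ≠ σ j₀ →
      (β₀ + γ₀ j₀ ≠ β₁ + γ₁ j₁ ∧
        β₀ + γ₀ j₀ ≠ β₀₁ + γ₀ j₀ + γ₁ j₁ ∧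
        β₁ + γ₁ j₁ ≠ β₀₁ + γ₀ j₀ + γ₁ j₁) :=
    fun j₀ hρj₀ hj₀ j₁ hρj₁ hj₁ hσj₁ => add_ne_and_add_ne_and_add_ne
      (fun h => hσj₁ (hσ_uniq j₀ j₁ hj₁ h)) (fun h => hρj₁.ne' (hρ₁_uniq j₁ hj₁ h))
      (fun h => hρj₀.ne' (hρ₀_uniq j₀ hj₀ h))
  refine ⟨⟨ρ₀, hρ₀, ρ₁, hρ₁, Iio lam₀, σ, fun _ => id, fun j _ => hσ j,
    fun j₀ hρj₀ hj₀ j₁ hρj₁ hj₁ hσj₁ => distinct j₀ hρj₀ hj₀ j₁ hρj₁ hj₁ (hσj₁ hj₀)⟩, ?_⟩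
  intro ν₀ hν₀ ν₁ hν₁
  obtain ⟨j₀, hj₀, hmax₀⟩ := h₀.isSuccPrelimit.lt_iff_exists_lt.mp (max_lt hρ₀ hν₀)
  obtain ⟨j₁, hmax₁, hj₁, hσj₁⟩ := h₁.isSuccPrelimit.exists_ne_of_lt (max_lt hρ₁ hν₁) (σ j₀)
  rw [max_lt_iff] at hmax₀ hmax₁
  exact ⟨j₀, hmax₀.2, hj₀, j₁, hmax₁.2, hj₁, distinct j₀ hmax₀.1 hj₀ j₁ hmax₁.1 hj₁ hσj₁⟩

/-- Lemma 3 of the paper: for two strictly increasing nonnegative families `γ₀, γ₁`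
indexed by ordinals below limit ordinals `lam₀, lam₁`, the three elements
`β₀ + γ₀ j₀`, `β₁ + γ₁ j₁`, `β₀₁ + γ₀ j₀ + γ₁ j₁` are pairwise distinct for all large
`j₀, j₁` avoiding the graph of a partial map `σ : A → {ordinals < lam₁}`; in particular
beyond any `ν₀, ν₁` some pair `j₀, j₁` makes them pairwise distinct. -/
theorem two_sequences_lemma {G : Type*} [AddCommGroup G] [LinearOrder G] [IsOrderedAddMonoid G]
    (β₀ β₁ β₀₁ : G) (lam₀ lam₁ : Ordinal) (h₀ : Order.IsSuccLimit lam₀) (h₁ : Order.IsSuccLimit lam₁)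
    (γ₀ γ₁ : Ordinal → G)
    (hm₀ : ∀ j j' : Ordinal, j < j' → j' < lam₀ → γ₀ j < γ₀ j')
    (hm₁ : ∀ j j' : Ordinal, j < j' → j' < lam₁ → γ₁ j < γ₁ j')
    (hn₀ : ∀ j < lam₀, (0 : G) ≤ γ₀ j) (hn₁ : ∀ j < lam₁, (0 : G) ≤ γ₁ j) :
    (∃ ρ₀ < lam₀, ∃ ρ₁ < lam₁, ∃ (A : Set Ordinal) (σ : Ordinal → Ordinal),
      (∀ j ∈ A, j < lam₀) ∧ (∀ j ∈ A, σ j < lam₁) ∧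
      ∀ j₀, ρ₀ < j₀ → j₀ < lam₀ → ∀ j₁, ρ₁ < j₁ → j₁ < lam₁ → (j₀ ∈ A → j₁ ≠ σ j₀) →
        (β₀ + γ₀ j₀ ≠ β₁ + γ₁ j₁ ∧
          β₀ + γ₀ j₀ ≠ β₀₁ + γ₀ j₀ + γ₁ j₁ ∧
          β₁ + γ₁ j₁ ≠ β₀₁ + γ₀ j₀ + γ₁ j₁)) ∧
    (∀ ν₀, ν₀ < lam₀ → ∀ ν₁, ν₁ < lam₁ →
      ∃ j₀, ν₀ < j₀ ∧ j₀ < lam₀ ∧ ∃ j₁, ν₁ < j₁ ∧ j₁ < lam₁ ∧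
        (β₀ + γ₀ j₀ ≠ β₁ + γ₁ j₁ ∧
          β₀ + γ₀ j₀ ≠ β₀₁ + γ₀ j₀ + γ₁ j₁ ∧
          β₁ + γ₁ j₁ ≠ β₀₁ + γ₀ j₀ + γ₁ j₁)) :=
  two_sequences_lemma_general β₀ β₁ β₀₁ lam₀ lam₁ h₀ h₁ γ₀ γ₁ hm₀ hm₁
end

section
/- Let G be a linearly ordered abelian group, let m be a natural number, let S be a set of nonempty subsets of {0,…,m}, let (β_σ)_{σ∈S} be elements of G, let (t_e)_{0≤e≤m} be positive integers, let λ_0,…,λ_m be limit ordinals, and for each 0 ≤ e ≤ m let (γ_{e,j})_{j<λ_e} be a strictly increasing family of elements ≥ 0 of G. For a choice of ordinals j_e < λ_e (0 ≤ e ≤ m) and σ ∈ S set P_{σ} = β_σ + Σ_{e∈σ} t_e·γ_{e,j_e}. Then for any ordinals ρ_e < λ_e (0 ≤ e ≤ m) there exist ordinals j_e with ρ_e < j_e < λ_e (0 ≤ e ≤ m) such that the elements P_σ, σ ∈ S, are pairwise distinct. -/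
/-!
The indices are chosen one coordinate at a time. Once the other coordinates are fixed, a
coincidence `P σ = P σ'` with `e ∈ σ \ σ'` determines `t e • γ e (j e)`, so by strict monotonicity
it excludes at most one value of `j e`, while coincidences with `e` in both or neither of `σ, σ'`
do not involve `j e` at all. There are finitely many pairs `σ, σ'`, and the interval `(ρ e, λ e)`
below a limit ordinal is infinite, so a good value of `j e` always remains.
-/

open scoped symmDiff
open Function

theorem Order.IsSuccLimit.Ioo_infinite {α : Type*} [LinearOrder α] [SuccOrder α] {a b : α}
    (hb : IsSuccLimit b) (hab : a < b) : (Set.Ioo a b).Infinite := by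
  have succ_mem : ∀ x ∈ Set.Ioo a b, succ x ∈ Set.Ioo a b := fun x hx =>
    ⟨hx.1.trans (lt_succ_of_not_isMax hx.2.not_isMax), hb.succ_lt hx.2⟩
  intro hfin
  obtain ⟨i, hi⟩ := hfin.exists_maximal
    ⟨succ a, lt_succ_of_not_isMax hab.not_isMax, hb.succ_lt hab⟩
  exact (lt_succ_of_not_isMax hi.prop.2.not_isMax).not_ge
    (hi.le_of_ge (succ_mem i hi.prop) (le_succ i))

section

variable {ι G : Type*} {α : ι → Type*} [DecidableEq ι] [AddCommGroup G]
  (β : Finset ι → G) (g : ∀ e, α e → G)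

theorem add_sum_update_eq_iff_of_mem_iff {σ σ' : Finset ι} {e : ι} (he : e ∈ σ ↔ e ∈ σ')
    (j : ∀ e, α e) (x : α e) :
    β σ + ∑ i ∈ σ, g i (update j e x i) = β σ' + ∑ i ∈ σ', g i (update j e x i) ↔
      β σ + ∑ i ∈ σ, g i (j i) = β σ' + ∑ i ∈ σ', g i (j i) := by
  simp only [apply_update g]
  by_cases h : e ∈ σ
  · have h' := he.1 h
    rw [Finset.sum_update_of_mem h, Finset.sum_update_of_mem h',
      Finset.sum_eq_add_sum_sdiff_singleton_of_mem h,
      Finset.sum_eq_add_sum_sdiff_singleton_of_mem h']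
    simp only [add_left_comm (β _) (g e _), add_right_inj]
  · rw [Finset.sum_update_of_notMem h, Finset.sum_update_of_notMem (mt he.2 h)]

theorem subsingleton_setOf_add_sum_update_eq {σ σ' : Finset ι} {e : ι} (h : e ∈ σ)
    (h' : e ∉ σ') (j : ∀ e, α e) {A : Set (α e)} (hg : Set.InjOn (g e) A) :
    {x ∈ A | β σ + ∑ i ∈ σ, g i (update j e x i) =
      β σ' + ∑ i ∈ σ', g i (update j e x i)}.Subsingleton := by
  simp only [apply_update g, Finset.sum_update_of_mem h, Finset.sum_update_of_notMem h']
  rintro x ⟨hxA, hx⟩ y ⟨hyA, hy⟩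
  exact hg hxA hyA (add_right_cancel (add_left_cancel (hx.trans hy.symm)))

theorem exists_mem_forall_add_sum_update_ne [Finite ι] (j : ∀ e, α e) {e : ι}
    {A : Set (α e)} (hA : A.Infinite) (hg : Set.InjOn (g e) A) :
    ∃ x ∈ A, ∀ σ σ' : Finset ι, e ∈ σ → e ∉ σ' →
      β σ + ∑ i ∈ σ, g i (update j e x i) ≠ β σ' + ∑ i ∈ σ', g i (update j e x i) := by
  set bad := ⋃ p ∈ {p : Finset ι × Finset ι | e ∈ p.1 ∧ e ∉ p.2},
    {x ∈ A | β p.1 + ∑ i ∈ p.1, g i (update j e x i) = β p.2 + ∑ i ∈ p.2, g i (update j e x i)}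
  have hbad : bad.Finite := (Set.toFinite _).biUnion fun p hp =>
    (subsingleton_setOf_add_sum_update_eq β g hp.1 hp.2 j hg).finite
  obtain ⟨x, hxA, hxbad⟩ := hA.exists_notMem_finite hbad
  exact ⟨x, hxA, fun σ σ' h h' heq => hxbad (Set.mem_biUnion (x := (σ, σ')) ⟨h, h'⟩ ⟨hxA, heq⟩)⟩

theorem exists_forall_mem_injective_add_sum [Fintype ι] {A : ∀ e, Set (α e)}
    (hA : ∀ e, (A e).Infinite) (hg : ∀ e, Set.InjOn (g e) (A e)) :
    ∃ j : ∀ e, α e, (∀ e, j e ∈ A e) ∧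
      Injective fun σ : Finset ι => β σ + ∑ e ∈ σ, g e (j e) := by
  have key (s : Finset ι) : ∃ j : ∀ e, α e, (∀ e, j e ∈ A e) ∧ ∀ σ σ' : Finset ι, σ ∆ σ' ⊆ s →
      β σ + ∑ e ∈ σ, g e (j e) = β σ' + ∑ e ∈ σ', g e (j e) → σ = σ' := by
    induction s using Finset.induction_on with
    | empty =>
      refine ⟨fun e => (hA e).nonempty.some, fun e => (hA e).nonempty.some_mem, ?_⟩
      exact fun σ σ' hσσ' _ => symmDiff_eq_bot.1 (Finset.subset_empty.1 hσσ')
    | insert e s _ ih =>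
      obtain ⟨j, hjA, hj⟩ := ih
      obtain ⟨x, hxA, hx⟩ := exists_mem_forall_add_sum_update_ne β g j (hA e) (hg e)
      refine ⟨update j e x, (forall_update_iff j fun i y => y ∈ A i).2 ⟨hxA, fun i _ => hjA i⟩,
        fun σ σ' hσσ' heq => ?_⟩
      by_cases hmem : e ∈ σ ↔ e ∈ σ'
      · refine hj σ σ' (fun i hi => ?_) ((add_sum_update_eq_iff_of_mem_iff β g hmem j x).1 heq)
        refine Finset.mem_of_mem_insert_of_ne (hσσ' hi) ?_
        rintro rfl
        simp only [Finset.mem_symmDiff, hmem] at hi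
        tauto
      · by_cases h : e ∈ σ
        · exact (hx σ σ' h (fun h' => hmem (iff_of_true h h')) heq).elim
        · exact (hx σ' σ (by tauto) h heq.symm).elim
  obtain ⟨j, hjA, hj⟩ := key Finset.univ
  exact ⟨j, hjA, fun σ σ' => hj σ σ' (Finset.subset_univ _)⟩

end

theorem oe1_lemma_general {G : Type*} [AddCommGroup G] [LinearOrder G] [IsOrderedAddMonoid G] (m : ℕ)
    (S : Set (Finset (Fin (m + 1))))
    (β : Finset (Fin (m + 1)) → G) (t : Fin (m + 1) → ℤ) (ht : ∀ e, 0 < t e)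
    (lam : Fin (m + 1) → Ordinal) (hlam : ∀ e, Order.IsSuccLimit (lam e))
    (γ : Fin (m + 1) → Ordinal → G)
    (hmono : ∀ e, ∀ j j' : Ordinal, j < j' → j' < lam e → γ e j < γ e j')
    (ρ : Fin (m + 1) → Ordinal) (hρ : ∀ e, ρ e < lam e) :
    ∃ j : Fin (m + 1) → Ordinal, (∀ e, ρ e < j e ∧ j e < lam e) ∧
      ∀ σ ∈ S, ∀ σ' ∈ S, σ ≠ σ' →
        β σ + ∑ e ∈ σ, t e • γ e (j e) ≠ β σ' + ∑ e ∈ σ', t e • γ e (j e) := by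
  have hinj : ∀ e, Set.InjOn (fun x => t e • γ e x) (Set.Ioo (ρ e) (lam e)) := fun e =>
    StrictMonoOn.injOn fun x _ y hy hxy => zsmul_lt_zsmul_right (ht e) (hmono e x y hxy hy.2)
  obtain ⟨j, hjA, hj⟩ := exists_forall_mem_injective_add_sum β (fun e x => t e • γ e x)
    (fun e => (hlam e).Ioo_infinite (hρ e)) hinj
  exact ⟨j, hjA, fun σ _ σ' _ hne => hj.ne hne⟩

/-- Lemma 4 (oe1) of the paper: given a set `S` of nonempty subsets of `{0,…,m}`, elements
`β σ` of a linearly ordered abelian group, positive integers `t e`, and strictly increasing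
nonnegative families `γ e` indexed by ordinals below limit ordinals `lam e`, for any bounds
`ρ e < lam e` there are indices `ρ e < j e < lam e` making the elements
`β σ + ∑_{e ∈ σ} t e • γ e (j e)`, `σ ∈ S`, pairwise distinct. -/
theorem oe1_lemma {G : Type*} [AddCommGroup G] [LinearOrder G] [IsOrderedAddMonoid G] (m : ℕ)
    (S : Set (Finset (Fin (m + 1)))) (hS : ∀ σ ∈ S, σ.Nonempty)
    (β : Finset (Fin (m + 1)) → G) (t : Fin (m + 1) → ℤ) (ht : ∀ e, 0 < t e)
    (lam : Fin (m + 1) → Ordinal) (hlam : ∀ e, Order.IsSuccLimit (lam e))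
    (γ : Fin (m + 1) → Ordinal → G)
    (hmono : ∀ e, ∀ j j' : Ordinal, j < j' → j' < lam e → γ e j < γ e j')
    (hnonneg : ∀ e, ∀ j < lam e, (0 : G) ≤ γ e j)
    (ρ : Fin (m + 1) → Ordinal) (hρ : ∀ e, ρ e < lam e) :
    ∃ j : Fin (m + 1) → Ordinal, (∀ e, ρ e < j e ∧ j e < lam e) ∧
      ∀ σ ∈ S, ∀ σ' ∈ S, σ ≠ σ' →
        β σ + ∑ e ∈ σ, t e • γ e (j e) ≠ β σ' + ∑ e ∈ σ', t e • γ e (j e) :=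
  oe1_lemma_general m S β t ht lam hlam γ hmono ρ hρ
end

section
/- Let V ⊆ V' be an immediate extension of valuation rings with maximal ideals m, m', fraction fields K ⊆ K', and valuation val. Let y_0 ∈ V' and set y_1 = y_0². Assume K' = K(y_0) and that for e = 0,1 the element y_e is a pseudo limit of a pseudo convergent sequence v_e = (v_{e,j})_{j<λ_e} of elements of V which has no pseudo limit in K. Set y_{e,j} = (y_e − v_{e,j})/(v_{e,j+1} − v_{e,j}) ∈ V'. Then for every polynomial g ∈ V[Y_0,Y_1] with deg_{Y_0} g ≤ 1 and deg_{Y_1} g ≤ 1 and every pair of ordinals ν_0 < λ_0, ν_1 < λ_1, there exist ordinals j_0, j_1 with ν_0 < j_0 < λ_0 and ν_1 < j_1 < λ_1, an element c ∈ V, c ≠ 0, and a polynomial g_1 in two variables over V such that g(y_0,y_1) = c · g_1(y_{0,j_0}, y_{1,j_1}), g_1 has at least one coefficient outside m, and the nonzero coefficients of the monomials of g_1 − g_1(0,0) have pairwise distinct values under val. -/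
/-!
Write `y e = w e + δ e * Z e` with `w e = v e (j e)`, `δ e = v e (j e + 1) - v e (j e)` and
`Z e = y_{e, j e}`, so that `g(y)` becomes a polynomial over `V` in `Z`. For
`g = A₀ + A₁ Y₀ + A₂ Y₁ + A₃ Y₀ Y₁` its non-constant coefficients are `(A₁ + A₃ w₁) δ₀`,
`(A₂ + A₃ w₀) δ₁` and `A₃ δ₀ δ₁`. As `-A₁ / A₃ ∈ K` is not a pseudo limit of `v 1`, the value of
`A₁ + A₃ v 1 j` is eventually constant (likewise for `A₂ + A₃ v 0 j`), whereas
`val δ e = val (y e - v e (j e))` strictly decreases in `j e`. So `j 0`, and then `j 1`, can be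
chosen to avoid the finitely many values at which two of the three coefficient values coincide.
When `g = 0` the same is done with `Y₀² - Y₁`, which vanishes at `y`. Finally all coefficients
are divided by one of them that divides the others in the valuation ring `V`.
-/

open MvPolynomial Set

section PseudoLimit

variable {F Γ₀ : Type*} [Field F] [LinearOrderedCommGroupWithZero Γ₀]

def IsPseudoLimit (val : Valuation F Γ₀) (lam : Ordinal) (a : Ordinal → F) (y : F) : Prop :=
  ∀ j j' : Ordinal, j < j' → j' < lam → val (y - a j') < val (y - a j)

def normalizedRemainder (a : Ordinal → F) (y : F) (j : Ordinal) : F :=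
  (y - a j) / (a (j + 1) - a j)

namespace IsPseudoLimit

variable {val : Valuation F Γ₀} {lam : Ordinal} {a : Ordinal → F} {y : F}

theorem valuation_sub_eq (hy : IsPseudoLimit val lam a y) {j j' : Ordinal} (hjj' : j < j')
    (hj' : j' < lam) : val (a j' - a j) = val (y - a j) := by
  rw [show a j' - a j = (y - a j) - (y - a j') by ring,
    val.map_sub_eq_of_lt_left (hy j j' hjj' hj')]

theorem valuation_sub_ne_zero (hy : IsPseudoLimit val lam a y) (hlam : Order.IsSuccLimit lam)
    {j : Ordinal} (hj : j < lam) : val (y - a j) ≠ 0 :=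
  (zero_le.trans_lt (hy j (j + 1) (Order.lt_add_one_iff.2 le_rfl) (hlam.add_one_lt hj))).ne'

theorem valuation_succ_sub (hy : IsPseudoLimit val lam a y) (hlam : Order.IsSuccLimit lam)
    {j : Ordinal} (hj : j < lam) : val (a (j + 1) - a j) = val (y - a j) :=
  hy.valuation_sub_eq (Order.lt_add_one_iff.2 le_rfl) (hlam.add_one_lt hj)

theorem eq_add_mul_normalizedRemainder (hy : IsPseudoLimit val lam a y)
    (hlam : Order.IsSuccLimit lam) {j : Ordinal} (hj : j < lam) :
    y = a j + (a (j + 1) - a j) * normalizedRemainder a y j := by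
  have hδ : a (j + 1) - a j ≠ 0 := fun h => hy.valuation_sub_ne_zero hlam hj <| by
    rw [← hy.valuation_succ_sub hlam hj, h, map_zero]
  rw [normalizedRemainder, mul_div_cancel₀ _ hδ]
  ring

theorem exists_valuation_sub_eq_of_not_isPseudoLimit (hy : IsPseudoLimit val lam a y) {u : F}
    (hu : ¬ IsPseudoLimit val lam a u) :
    ∃ b < lam, ∃ s, ∀ j ∈ Ioo b lam, val (u - a j) = s := by
  obtain ⟨b, hb, hne⟩ : ∃ b < lam, val (u - a b) ≠ val (y - a b) := by
    by_contra! h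
    exact hu fun j j' hjj' hj' => by rw [h j (hjj'.trans hj'), h j' hj']; exact hy j j' hjj' hj'
  refine ⟨b, hb, max (val (u - a b)) (val (y - a b)), fun j ⟨hbj, hj⟩ => ?_⟩
  have hd : val (a b - a j) = val (y - a b) := by
    rw [val.map_sub_swap]; exact hy.valuation_sub_eq hbj hj
  rw [show u - a j = (u - a b) + (a b - a j) by ring, val.map_add_of_distinct_val (hd ▸ hne), hd]

theorem exists_valuation_add_mul_eq (hy : IsPseudoLimit val lam a y)
    (hlam : Order.IsSuccLimit lam) {K : Subfield F}
    (hK : ∀ u ∈ K, ¬ IsPseudoLimit val lam a u) {α β : F} (hα : α ∈ K) (hβ : β ∈ K) :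
    ∃ b < lam, ∃ s, ∀ j ∈ Ioo b lam, val (α + β * a j) = s := by
  rcases eq_or_ne β 0 with rfl | hβ0
  · exact ⟨0, hlam.bot_lt, val α, fun j _ => by rw [zero_mul, add_zero]⟩
  obtain ⟨b, hb, s, hs⟩ :=
    hy.exists_valuation_sub_eq_of_not_isPseudoLimit (hK _ (K.neg_mem (K.div_mem hα hβ)))
  refine ⟨b, hb, val β * s, fun j hj => ?_⟩
  rw [← hs j hj, ← map_mul, ← val.map_neg]
  congr 1
  field_simp
  ring

theorem exists_valuation_sub_notMem (hy : IsPseudoLimit val lam a y)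
    (hlam : Order.IsSuccLimit lam) {b : Ordinal} (hb : b < lam) {S : Set Γ₀} (hS : S.Finite) :
    ∃ j ∈ Ioo b lam, val (y - a j) ∉ S := by
  have hlt (n : ℕ) : b + 1 + n < lam := hlam.add_natCast_lt (hlam.add_one_lt hb) n
  have hmono : StrictAnti fun n : ℕ => val (y - a (b + 1 + n)) := fun n n' hnn' =>
    hy _ _ (by simpa using hnn') (hlt n')
  by_contra! h
  exact infinite_range_of_injective hmono.injective
    (hS.subset (range_subset_iff.2 fun n => h _ ⟨(Order.lt_add_one_iff.2 le_rfl).trans_le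
      le_self_add, hlt n⟩))

end IsPseudoLimit

end PseudoLimit

namespace MvPolynomial

variable {R σ ι : Type*}

section Monomials

variable [CommSemiring R] [Fintype ι] {m : ι → σ →₀ ℕ} {k : ι → R}

theorem coeff_sum_monomial_of_injective (hm : Function.Injective m) (i : ι) :
    coeff (m i) (∑ i', monomial (m i') (k i')) = k i := by
  classical
  simp [coeff_sum, coeff_monomial, hm.eq_iff]

theorem coeff_sum_monomial_of_notMem_range {d : σ →₀ ℕ} (hd : d ∉ range m) :
    coeff d (∑ i, monomial (m i) (k i)) = 0 := by
  classical
  simp only [coeff_sum, coeff_monomial]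
  exact Finset.sum_eq_zero fun i _ => if_neg fun h => hd ⟨i, h⟩

theorem injOn_coeff_sum_monomial (hm : Function.Injective m) {β : Type*} (φ : R → β)
    (h : InjOn (φ ∘ k) {i | m i ≠ 0 ∧ k i ≠ 0}) :
    InjOn (fun d => φ (coeff d (∑ i, monomial (m i) (k i))))
      (↑(∑ i, monomial (m i) (k i)).support \ {0}) := by
  have hsub : (↑(∑ i, monomial (m i) (k i)).support \ {0} : Set (σ →₀ ℕ)) ⊆
      m '' {i | m i ≠ 0 ∧ k i ≠ 0} := by
    rintro d ⟨hd, hd0⟩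
    rw [Finset.mem_coe, mem_support_iff] at hd
    by_cases hr : d ∈ range m
    · obtain ⟨i, rfl⟩ := hr
      exact ⟨i, ⟨hd0, by rwa [coeff_sum_monomial_of_injective hm] at hd⟩, rfl⟩
    · exact absurd (coeff_sum_monomial_of_notMem_range hr) hd
  refine (InjOn.image_of_comp ?_).mono hsub
  exact h.congr fun i _ => by simp [coeff_sum_monomial_of_injective hm]

theorem sum_monomial_ne_zero (hm : Function.Injective m) (hk : k ≠ 0) :
    ∑ i, monomial (m i) (k i) ≠ 0 := by
  obtain ⟨i, hi⟩ := Function.ne_iff.1 hk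
  intro h
  rw [← coeff_sum_monomial_of_injective (k := k) hm i, h, coeff_zero] at hi
  exact hi rfl

end Monomials

theorem exists_eq_C_mul_coeff_eq_one [CommRing R] [IsDomain R] [PreValuationRing R]
    {f : MvPolynomial σ R} (hf : f ≠ 0) :
    ∃ c ≠ 0, ∃ g, f = C c * g ∧ ∃ d, g.coeff d = 1 := by
  classical
  obtain ⟨d, hd, hmax⟩ :=
    f.support.exists_max_image (fun d => Ideal.span {f.coeff d}) (support_nonempty.2 hf)
  obtain ⟨g, hg⟩ : C (f.coeff d) ∣ f := (C_dvd_iff_dvd_coeff _ _).2 fun d' => by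
    by_cases hd' : d' ∈ f.support
    · exact Ideal.span_singleton_le_span_singleton.1 (hmax d' hd')
    · rw [notMem_support_iff.1 hd']
      exact dvd_zero _
  have hc := mem_support_iff.1 hd
  refine ⟨_, hc, g, hg, d, (mul_eq_left₀ hc).1 ?_⟩
  conv_rhs => rw [hg]
  rw [coeff_C_mul]

end MvPolynomial

section DistinctValuations

variable {F Γ₀ σ : Type*} [Field F] [LinearOrderedCommGroupWithZero Γ₀] (val : Valuation F Γ₀)
  {V : Subring F}

def HasDistinctCoeffValuations (f : MvPolynomial σ V) : Prop :=
  InjOn (fun d => val ((f.coeff d : V) : F)) ((f.support : Set (σ →₀ ℕ)) \ {0})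

variable {val}

theorem HasDistinctCoeffValuations.of_eq_C_mul {c : V} (hc : c ≠ 0) {f g : MvPolynomial σ V}
    (h : f = C c * g) (hf : HasDistinctCoeffValuations val f) :
    HasDistinctCoeffValuations val g := by
  have hsub : (↑g.support : Set (σ →₀ ℕ)) ⊆ ↑f.support := fun d hd => by
    simpa [h, coeff_C_mul, hc] using hd
  refine fun d hd d' hd' heq => hf ⟨hsub hd.1, hd.2⟩ ⟨hsub hd'.1, hd'.2⟩ ?_
  simp only [h, coeff_C_mul, Subring.coe_mul, map_mul] at heq ⊢
  rw [heq]

theorem hasDistinctCoeffValuations_sum_monomial {ι : Type*} [Fintype ι] {m : ι → σ →₀ ℕ}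
    (hm : Function.Injective m) {k : ι → V}
    (h : InjOn (fun i => val (k i : F)) {i | m i ≠ 0 ∧ val (k i : F) ≠ 0}) :
    HasDistinctCoeffValuations val (∑ i, monomial (m i) (k i)) := by
  refine injOn_coeff_sum_monomial hm (fun r : V => val (r : F)) (h.mono fun i hi => ?_)
  simpa using hi

end DistinctValuations

theorem injOn_fin_four {β : Type*} [Zero β] {x : Fin 4 → β}
    (h12 : x 1 ≠ 0 → x 2 ≠ 0 → x 1 ≠ x 2) (h13 : x 1 ≠ 0 → x 3 ≠ 0 → x 1 ≠ x 3)
    (h23 : x 2 ≠ 0 → x 3 ≠ 0 → x 2 ≠ x 3) : InjOn x {i | i ≠ 0 ∧ x i ≠ 0} := by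
  rintro i ⟨hi, hxi⟩ j ⟨hj, hxj⟩ h
  fin_cases i <;> fin_cases j <;> simp_all

theorem Subring.preValuationRing_of_mem_or_inv_mem {F : Type*} [Field F] {V : Subring F}
    {K : Subfield F} (hVK : (V : Set F) ⊆ K) (hvr : ∀ z ∈ K, z ∈ V ∨ z⁻¹ ∈ V) :
    PreValuationRing V := by
  refine ⟨fun a b => ?_⟩
  rcases eq_or_ne a 0 with rfl | ha
  · exact ⟨0, Or.inr (by simp)⟩
  rcases eq_or_ne b 0 with rfl | hb
  · exact ⟨0, Or.inl (by simp)⟩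
  rcases hvr (a / b) (K.div_mem (hVK a.2) (hVK b.2)) with h | h
  · refine ⟨⟨_, h⟩, Or.inr (Subtype.ext ?_)⟩
    exact mul_div_cancel₀ _ (by simpa using hb)
  · refine ⟨⟨_, h⟩, Or.inl (Subtype.ext ?_)⟩
    simpa using mul_div_cancel₀ (b : F) (by simpa using ha)

section ShiftedCoefficients

variable {R S : Type*} [CommRing R] [CommRing S]

noncomputable def bilinearExponents : Fin 4 → Fin 2 →₀ ℕ :=
  ![0, Finsupp.single 0 1, Finsupp.single 1 1, Finsupp.single 0 1 + Finsupp.single 1 1]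

noncomputable def squareExponents : Fin 4 → Fin 2 →₀ ℕ :=
  ![0, Finsupp.single 0 1, Finsupp.single 1 1, Finsupp.single 0 2]

theorem bilinearExponents_injective : Function.Injective bilinearExponents := by
  intro i j h
  have h0 := DFunLike.congr_fun h 0
  have h1 := DFunLike.congr_fun h 1
  fin_cases i <;> fin_cases j <;> simp [bilinearExponents] at h0 h1 ⊢

theorem squareExponents_injective : Function.Injective squareExponents := by
  intro i j h
  have h0 := DFunLike.congr_fun h 0
  have h1 := DFunLike.congr_fun h 1
  fin_cases i <;> fin_cases j <;> simp [squareExponents] at h0 h1 ⊢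

theorem eq_sum_monomial_bilinearExponents {g : MvPolynomial (Fin 2) R}
    (hg : ∀ i, g.degreeOf i ≤ 1) :
    g = ∑ i, monomial (bilinearExponents i) (g.coeff (bilinearExponents i)) := by
  ext d
  by_cases hd : d ∈ range bilinearExponents
  · obtain ⟨i, rfl⟩ := hd
    rw [coeff_sum_monomial_of_injective bilinearExponents_injective]
  rw [coeff_sum_monomial_of_notMem_range hd, ← notMem_support_iff]
  refine fun hmem => hd ?_
  have h0 := (monomial_le_degreeOf 0 hmem).trans (hg 0)
  have h1 := (monomial_le_degreeOf 1 hmem).trans (hg 1)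
  have hd : d = Finsupp.single 0 (d 0) + Finsupp.single 1 (d 1) := by
    ext e
    fin_cases e <;> simp
  interval_cases h0' : d 0 <;> interval_cases h1' : d 1 <;> rw [hd]
  exacts [⟨0, by simp [bilinearExponents]⟩, ⟨2, by simp [bilinearExponents]⟩,
    ⟨1, by simp [bilinearExponents]⟩, ⟨3, rfl⟩]

def bilinearShift (A : Fin 4 → R) (w δ : Fin 2 → R) : Fin 4 → R :=
  ![A 0 + A 1 * w 0 + A 2 * w 1 + A 3 * (w 0 * w 1), (A 1 + A 3 * w 1) * δ 0,
    (A 2 + A 3 * w 0) * δ 1, A 3 * (δ 0 * δ 1)]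

def squareShift (w δ : Fin 2 → R) : Fin 4 → R :=
  ![w 0 ^ 2 - w 1, 2 * w 0 * δ 0, -δ 1, δ 0 ^ 2]

theorem eval₂_sum_monomial_bilinearShift (φ : R →+* S) (A : Fin 4 → R) (w δ : Fin 2 → R)
    (Z : Fin 2 → S) :
    eval₂ φ Z (∑ i, monomial (bilinearExponents i) (bilinearShift A w δ i)) =
      eval₂ φ (fun e => φ (w e) + φ (δ e) * Z e) (∑ i, monomial (bilinearExponents i) (A i)) := by
  simp [Fin.sum_univ_four, eval₂_monomial, bilinearExponents, bilinearShift,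
    Finsupp.prod_add_index', pow_add]
  ring

theorem eval₂_sum_monomial_squareShift (φ : R →+* S) (w δ : Fin 2 → R) (Z : Fin 2 → S) :
    eval₂ φ Z (∑ i, monomial (squareExponents i) (squareShift w δ i)) =
      (φ (w 0) + φ (δ 0) * Z 0) ^ 2 - (φ (w 1) + φ (δ 1) * Z 1) := by
  simp [Fin.sum_univ_four, eval₂_monomial, squareExponents, squareShift, map_ofNat]
  ring

theorem bilinearShift_ne_zero [IsDomain R] {A : Fin 4 → R} (hA : A ≠ 0) {w δ : Fin 2 → R}
    (hδ : ∀ e, δ e ≠ 0) : bilinearShift A w δ ≠ 0 := by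
  intro h
  have h3 : A 3 = 0 := by simpa [bilinearShift, hδ] using congr_fun h 3
  have h1 : A 1 = 0 := by simpa [bilinearShift, hδ, h3] using congr_fun h 1
  have h2 : A 2 = 0 := by simpa [bilinearShift, hδ, h3] using congr_fun h 2
  have h0 : A 0 = 0 := by simpa [bilinearShift, h1, h2, h3] using congr_fun h 0
  exact hA (funext fun i => by fin_cases i <;> assumption)

end ShiftedCoefficients

section ValueGroup

variable {Γ₀ : Type*} [LinearOrderedCommGroupWithZero Γ₀] {x : Fin 4 → Γ₀} {γ₀ γ₁ a b c : Γ₀}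

theorem injOn_bilinear_values (hγ₀ : γ₀ ≠ 0) (hγ₁ : γ₁ ≠ 0) (h1 : x 1 = a * γ₀)
    (h2 : x 2 = b * γ₁) (h3 : x 3 = c * (γ₀ * γ₁)) (hγ₀' : γ₀ ≠ b * c⁻¹)
    (hγ₁' : γ₁ ∉ ({a * c⁻¹, a * γ₀ * b⁻¹} : Set Γ₀)) : InjOn x {i | i ≠ 0 ∧ x i ≠ 0} := by
  apply injOn_fin_four <;> simp only [h1, h2, h3]
  · refine fun _ hb h => hγ₁' (Or.inr ((eq_mul_inv_iff_mul_eq₀ (left_ne_zero_of_mul hb)).2 ?_))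
    rw [h, mul_comm]
  · refine fun _ hc h => hγ₁' (Or.inl ((eq_mul_inv_iff_mul_eq₀ (left_ne_zero_of_mul hc)).2 ?_))
    refine mul_right_cancel₀ hγ₀ ?_
    rw [h]
    ac_rfl
  · refine fun _ hc h => hγ₀' ((eq_mul_inv_iff_mul_eq₀ (left_ne_zero_of_mul hc)).2 ?_)
    refine mul_right_cancel₀ hγ₁ ?_
    rw [h]
    ac_rfl

theorem injOn_square_values (hγ₀ : γ₀ ≠ 0) (h1 : x 1 = a * γ₀) (h2 : x 2 = γ₁)
    (h3 : x 3 = γ₀ ^ 2) (hγ₀' : γ₀ ≠ a) (hγ₁' : γ₁ ∉ ({a * γ₀, γ₀ ^ 2} : Set Γ₀)) :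
    InjOn x {i | i ≠ 0 ∧ x i ≠ 0} := by
  apply injOn_fin_four <;> simp only [h1, h2, h3]
  · exact fun _ _ h => hγ₁' (Or.inl h.symm)
  · exact fun _ _ h => hγ₀' (mul_right_cancel₀ hγ₀ (h.trans (sq γ₀))).symm
  · exact fun _ _ h => hγ₁' (Or.inr h)

end ValueGroup

section Expansion

variable {F Γ₀ : Type*} [Field F] [LinearOrderedCommGroupWithZero Γ₀] {val : Valuation F Γ₀}
  {V : Subring F} {lam : Fin 2 → Ordinal} {v : Fin 2 → Ordinal → F} {y : Fin 2 → F}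

theorem exists_indices_valuation_sub_notMem (hlam : ∀ e, Order.IsSuccLimit (lam e))
    (hpl : ∀ e, IsPseudoLimit val (lam e) (v e) (y e)) {ν b : Fin 2 → Ordinal}
    (hν : ∀ e, ν e < lam e) (hb : ∀ e, b e < lam e) {S₀ : Set Γ₀} (hS₀ : S₀.Finite)
    {S₁ : Γ₀ → Set Γ₀} (hS₁ : ∀ γ, (S₁ γ).Finite) :
    ∃ j : Fin 2 → Ordinal, (∀ e, ν e < j e ∧ j e < lam e) ∧ (∀ e, j e ∈ Ioo (b e) (lam e)) ∧
      val (y 0 - v 0 (j 0)) ∉ S₀ ∧ val (y 1 - v 1 (j 1)) ∉ S₁ (val (y 0 - v 0 (j 0))) := by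
  obtain ⟨j₀, ⟨hj₀, hj₀'⟩, h₀⟩ :=
    (hpl 0).exists_valuation_sub_notMem (hlam 0) (max_lt (hν 0) (hb 0)) hS₀
  obtain ⟨j₁, ⟨hj₁, hj₁'⟩, h₁⟩ :=
    (hpl 1).exists_valuation_sub_notMem (hlam 1) (max_lt (hν 1) (hb 1))
      (hS₁ (val (y 0 - v 0 j₀)))
  rw [max_lt_iff] at hj₀ hj₁
  exact ⟨![j₀, j₁], Fin.forall_fin_two.2 ⟨⟨hj₀.1, hj₀'⟩, ⟨hj₁.1, hj₁'⟩⟩,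
    Fin.forall_fin_two.2 ⟨⟨hj₀.2, hj₀'⟩, ⟨hj₁.2, hj₁'⟩⟩, h₀, h₁⟩

theorem exists_eq_add_mul_normalizedRemainder (hlam : ∀ e, Order.IsSuccLimit (lam e))
    (hvV : ∀ e, ∀ j < lam e, v e j ∈ V) (hpl : ∀ e, IsPseudoLimit val (lam e) (v e) (y e)) {j : Fin 2 → Ordinal}
    (hj : ∀ e, j e < lam e) :
    ∃ w δ : Fin 2 → V, (∀ e, (w e : F) = v e (j e) ∧ val (δ e : F) = val (y e - v e (j e))) ∧
      (∀ e, δ e ≠ 0) ∧ y = fun e => w e + δ e * normalizedRemainder (v e) (y e) (j e) := by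
  refine ⟨fun e => ⟨v e (j e), hvV e _ (hj e)⟩,
    fun e => ⟨v e (j e + 1) - v e (j e),
      V.sub_mem (hvV e _ ((hlam e).add_one_lt (hj e))) (hvV e _ (hj e))⟩,
    fun e => ⟨rfl, (hpl e).valuation_succ_sub (hlam e) (hj e)⟩, fun e h => ?_,
    funext fun e => (hpl e).eq_add_mul_normalizedRemainder (hlam e) (hj e)⟩
  apply (hpl e).valuation_sub_ne_zero (hlam e) (hj e)
  rw [← (hpl e).valuation_succ_sub (hlam e) (hj e)]
  simpa using congrArg (fun x : V => val (x : F)) h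

theorem exists_expansion_of_ne_zero {K : Subfield F} (hVK : (V : Set F) ⊆ K)
    (hlam : ∀ e, Order.IsSuccLimit (lam e)) (hvV : ∀ e, ∀ j < lam e, v e j ∈ V)
    (hpl : ∀ e, IsPseudoLimit val (lam e) (v e) (y e))
    (hnpl : ∀ e, ∀ u ∈ K, ¬ IsPseudoLimit val (lam e) (v e) u)
    {g : MvPolynomial (Fin 2) V} (hdeg : ∀ i, g.degreeOf i ≤ 1) (hg : g ≠ 0)
    {ν : Fin 2 → Ordinal} (hν : ∀ e, ν e < lam e) :
    ∃ j : Fin 2 → Ordinal, (∀ e, ν e < j e ∧ j e < lam e) ∧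
      ∃ f : MvPolynomial (Fin 2) V, f ≠ 0 ∧
        eval₂ V.subtype y g = eval₂ V.subtype (fun e => normalizedRemainder (v e) (y e) (j e)) f ∧
        HasDistinctCoeffValuations val f := by
  set A : Fin 4 → V := fun i => g.coeff (bilinearExponents i)
  obtain ⟨b₀, hb₀, s₂, hs₂⟩ :=
    (hpl 0).exists_valuation_add_mul_eq (hlam 0) (hnpl 0) (hVK (A 2).2) (hVK (A 3).2)
  obtain ⟨b₁, hb₁, s₁, hs₁⟩ :=
    (hpl 1).exists_valuation_add_mul_eq (hlam 1) (hnpl 1) (hVK (A 1).2) (hVK (A 3).2)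
  set s₃ := val (A 3 : F)
  obtain ⟨j, hj, hjb, hγ₀, hγ₁⟩ := exists_indices_valuation_sub_notMem hlam hpl hν (b := ![b₀, b₁])
    (Fin.forall_fin_two.2 ⟨hb₀, hb₁⟩) (toFinite {s₂ * s₃⁻¹})
    (S₁ := fun γ₀ => {s₁ * s₃⁻¹, s₁ * γ₀ * s₂⁻¹}) fun _ => toFinite _
  obtain ⟨w, δ, hwδ, hδ, hy⟩ :=
    exists_eq_add_mul_normalizedRemainder hlam hvV hpl fun e => (hj e).2
  set k := bilinearShift A w δ
  have hk₁ : val (k 1 : F) = s₁ * val (y 0 - v 0 (j 0)) := by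
    simp [k, bilinearShift, hwδ, hs₁ (j 1) (hjb 1)]
  have hk₂ : val (k 2 : F) = s₂ * val (y 1 - v 1 (j 1)) := by
    simp [k, bilinearShift, hwδ, hs₂ (j 0) (hjb 0)]
  have hk₃ : val (k 3 : F) = s₃ * (val (y 0 - v 0 (j 0)) * val (y 1 - v 1 (j 1))) := by
    simp [k, bilinearShift, hwδ, s₃]
  refine ⟨j, hj, ∑ i, monomial (bilinearExponents i) (k i), ?_, ?_, ?_⟩
  · refine sum_monomial_ne_zero bilinearExponents_injective (bilinearShift_ne_zero ?_ hδ)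
    refine fun hA => hg ?_
    rw [eq_sum_monomial_bilinearExponents hdeg]
    simp [show ∀ i, A i = 0 from congr_fun hA, A]
  · rw [eval₂_sum_monomial_bilinearShift, ← eq_sum_monomial_bilinearExponents hdeg]
    exact congrArg (eval₂ V.subtype · g) hy
  · refine hasDistinctCoeffValuations_sum_monomial bilinearExponents_injective
      (InjOn.mono ?_ (injOn_bilinear_values (x := fun i => val (k i : F))
        ((hpl 0).valuation_sub_ne_zero (hlam 0) (hj 0).2)
        ((hpl 1).valuation_sub_ne_zero (hlam 1) (hj 1).2) hk₁ hk₂ hk₃ hγ₀ hγ₁))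
    exact fun i hi => ⟨fun h => hi.1 (h ▸ rfl), hi.2⟩

theorem exists_relation_of_eq_sq {K : Subfield F} (hlam : ∀ e, Order.IsSuccLimit (lam e))
    (hvV : ∀ e, ∀ j < lam e, v e j ∈ V) (hpl : ∀ e, IsPseudoLimit val (lam e) (v e) (y e))
    (hnpl : ∀ e, ∀ u ∈ K, ¬ IsPseudoLimit val (lam e) (v e) u) (hy₁ : y 1 = y 0 ^ 2)
    {ν : Fin 2 → Ordinal} (hν : ∀ e, ν e < lam e) :
    ∃ j : Fin 2 → Ordinal, (∀ e, ν e < j e ∧ j e < lam e) ∧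
      ∃ f : MvPolynomial (Fin 2) V, f ≠ 0 ∧
        eval₂ V.subtype (fun e => normalizedRemainder (v e) (y e) (j e)) f = 0 ∧
        HasDistinctCoeffValuations val f := by
  obtain ⟨b₀, hb₀, s, hs⟩ := (hpl 0).exists_valuation_add_mul_eq (α := 0) (β := 2) (hlam 0)
    (hnpl 0) K.zero_mem (ofNat_mem K 2)
  obtain ⟨j, hj, hjb, hγ₀, hγ₁⟩ := exists_indices_valuation_sub_notMem hlam hpl hν (b := ![b₀, ν 1])
    (Fin.forall_fin_two.2 ⟨hb₀, hν 1⟩) (toFinite {s})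
    (S₁ := fun γ₀ => {s * γ₀, γ₀ ^ 2}) fun _ => toFinite _
  obtain ⟨w, δ, hwδ, hδ, hy⟩ :=
    exists_eq_add_mul_normalizedRemainder hlam hvV hpl fun e => (hj e).2
  set k := squareShift w δ
  have hk₁ : val (k 1 : F) = s * val (y 0 - v 0 (j 0)) := by
    have h2w := hs (j 0) (hjb 0)
    simp only [zero_add, map_mul] at h2w
    simp [k, squareShift, hwδ, ← h2w, show ((2 : V) : F) = 2 from rfl]
  have hk₂ : val (k 2 : F) = val (y 1 - v 1 (j 1)) := by simp [k, squareShift, hwδ]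
  have hk₃ : val (k 3 : F) = val (y 0 - v 0 (j 0)) ^ 2 := by simp [k, squareShift, hwδ]
  refine ⟨j, hj, ∑ i, monomial (squareExponents i) (k i),
    sum_monomial_ne_zero squareExponents_injective fun hk => hδ 0 ?_, ?_, ?_⟩
  · simpa [k, squareShift] using congr_fun hk 3
  · rw [eval₂_sum_monomial_squareShift]
    simp only [Subring.subtype_apply]
    rw [← congr_fun hy 0, ← congr_fun hy 1, hy₁, sub_self]
  · refine hasDistinctCoeffValuations_sum_monomial squareExponents_injective
      (InjOn.mono ?_ (injOn_square_values (x := fun i => val (k i : F))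
        ((hpl 0).valuation_sub_ne_zero (hlam 0) (hj 0).2) hk₁ hk₂ hk₃ hγ₀ hγ₁))
    exact fun i hi => ⟨fun h => hi.1 (h ▸ rfl), hi.2⟩

theorem exists_expansion {K : Subfield F} (hVK : (V : Set F) ⊆ K)
    (hlam : ∀ e, Order.IsSuccLimit (lam e)) (hvV : ∀ e, ∀ j < lam e, v e j ∈ V)
    (hpl : ∀ e, IsPseudoLimit val (lam e) (v e) (y e))
    (hnpl : ∀ e, ∀ u ∈ K, ¬ IsPseudoLimit val (lam e) (v e) u) (hy₁ : y 1 = y 0 ^ 2)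
    {g : MvPolynomial (Fin 2) V} (hdeg : ∀ i, g.degreeOf i ≤ 1)
    {ν : Fin 2 → Ordinal} (hν : ∀ e, ν e < lam e) :
    ∃ j : Fin 2 → Ordinal, (∀ e, ν e < j e ∧ j e < lam e) ∧
      ∃ f : MvPolynomial (Fin 2) V, f ≠ 0 ∧
        eval₂ V.subtype y g = eval₂ V.subtype (fun e => normalizedRemainder (v e) (y e) (j e)) f ∧
        HasDistinctCoeffValuations val f := by
  rcases eq_or_ne g 0 with rfl | hg
  · obtain ⟨j, hj, f, hf, heval, hdist⟩ := exists_relation_of_eq_sq hlam hvV hpl hnpl hy₁ hν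
    exact ⟨j, hj, f, hf, by rw [eval₂_zero, heval], hdist⟩
  · exact exists_expansion_of_ne_zero hVK hlam hvV hpl hnpl hdeg hg hν

end Expansion

theorem lemma_ka0_general {K' : Type*} [Field K'] (V' : ValuationSubring K') (V : Subring K')
    (K : Subfield K')
    (hVK : (V : Set K') ⊆ ↑K)
    (hvr : ∀ z ∈ K, z ∈ V ∨ z⁻¹ ∈ V)
    (y : Fin 2 → K') (hy1 : y 1 = y 0 ^ 2)
    (lam : Fin 2 → Ordinal) (hlam : ∀ e, Order.IsSuccLimit (lam e))
    (v : Fin 2 → Ordinal → K')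
    (hvV : ∀ e, ∀ j < lam e, v e j ∈ V)
    (hpl : ∀ e, ∀ j j' : Ordinal, j < j' → j' < lam e →
      V'.valuation (y e - v e j') < V'.valuation (y e - v e j))
    (hnpl : ∀ e, ∀ w ∈ K, ¬ (∀ j j' : Ordinal, j < j' → j' < lam e →
      V'.valuation (w - v e j') < V'.valuation (w - v e j)))
    (g : MvPolynomial (Fin 2) ↥V)
    (hdeg : ∀ i, g.degreeOf i ≤ 1)
    (ν : Fin 2 → Ordinal) (hν : ∀ e, ν e < lam e) :
    ∃ j : Fin 2 → Ordinal, (∀ e, ν e < j e ∧ j e < lam e) ∧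
      ∃ c : ↥V, c ≠ 0 ∧
        ∃ g₁ : MvPolynomial (Fin 2) ↥V,
          MvPolynomial.eval₂ V.subtype y g =
            (c : K') * MvPolynomial.eval₂ V.subtype
              (fun e => (y e - v e (j e)) / (v e (j e + 1) - v e (j e))) g₁ ∧
          (∃ d ∈ g₁.support, IsUnit (g₁.coeff d)) ∧
          (∀ d ∈ g₁.support, ∀ d' ∈ g₁.support, d ≠ 0 → d' ≠ 0 → d ≠ d' →
            V'.valuation ((g₁.coeff d : ↥V) : K') ≠ V'.valuation ((g₁.coeff d' : ↥V) : K')) := by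
  have := Subring.preValuationRing_of_mem_or_inv_mem hVK hvr
  obtain ⟨j, hj, f, hf, heval, hdist⟩ := exists_expansion hVK hlam hvV hpl hnpl hy1 hdeg hν
  obtain ⟨c, hc, g₁, rfl, d, hd⟩ := exists_eq_C_mul_coeff_eq_one hf
  refine ⟨j, hj, c, hc, g₁, ?_, ⟨d, by simp [hd], hd ▸ isUnit_one⟩, ?_⟩
  · rw [heval, eval₂_mul, eval₂_C]
    rfl
  · exact fun d hd d' hd' h0 h0' hne heq => hne (hdist.of_eq_C_mul hc rfl ⟨hd, h0⟩ ⟨hd', h0'⟩ heq)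

/-- Lemma ka0 of the paper. `V ⊆ V'` is an immediate extension of valuation rings with
fraction fields `K ⊆ K'`, `y 0 ∈ V'`, `y 1 = (y 0)²`, `K' = K(y 0)`, and each `y e` is a
pseudo limit of a pseudo convergent sequence `v e` of elements of `V` with no pseudo limit
in `K`.  Then every polynomial `g` of degree `≤ 1` in each of the two variables can be
rewritten, beyond any pair of indices `ν`, as `g(y 0, y 1) = c • g₁(y_{0,j₀}, y_{1,j₁})`
with `c ≠ 0`, `g₁` having a coefficient outside the maximal ideal of `V`, and the nonzero
coefficients of the monomials of `g₁ - g₁(0,0)` having pairwise distinct values. -/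
theorem lemma_ka0 {K' : Type*} [Field K'] (V' : ValuationSubring K') (V : Subring K')
    (K : Subfield K')
    (hVV' : (V : Set K') ⊆ ↑V')
    (hVK : (V : Set K') ⊆ ↑K)
    (hfrac : ∀ z ∈ K, ∃ a ∈ V, ∃ b ∈ V, b ≠ 0 ∧ z = a / b)
    (hvr : ∀ z ∈ K, z ∈ V ∨ z⁻¹ ∈ V)
    (himv : ∀ z : K', z ∈ V' → z ≠ 0 → ∃ a ∈ V, a ≠ 0 ∧ V'.valuation z = V'.valuation a)
    (himr : ∀ z : K', z ∈ V' → ∃ a ∈ V, V'.valuation (z - a) < 1)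
    (y : Fin 2 → K') (hy0 : y 0 ∈ V') (hy1 : y 1 = y 0 ^ 2)
    (hKy : Subfield.closure ((K : Set K') ∪ {y 0}) = ⊤)
    (lam : Fin 2 → Ordinal) (hlam : ∀ e, Order.IsSuccLimit (lam e))
    (v : Fin 2 → Ordinal → K')
    (hvV : ∀ e, ∀ j < lam e, v e j ∈ V)
    (hpc : ∀ e, ∀ j j' j'' : Ordinal, j < j' → j' < j'' → j'' < lam e →
      V'.valuation (v e j' - v e j'') < V'.valuation (v e j - v e j''))
    (hpl : ∀ e, ∀ j j' : Ordinal, j < j' → j' < lam e →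
      V'.valuation (y e - v e j') < V'.valuation (y e - v e j))
    (hnpl : ∀ e, ∀ w ∈ K, ¬ (∀ j j' : Ordinal, j < j' → j' < lam e →
      V'.valuation (w - v e j') < V'.valuation (w - v e j)))
    (g : MvPolynomial (Fin 2) ↥V)
    (hdeg : ∀ i, g.degreeOf i ≤ 1)
    (ν : Fin 2 → Ordinal) (hν : ∀ e, ν e < lam e) :
    ∃ j : Fin 2 → Ordinal, (∀ e, ν e < j e ∧ j e < lam e) ∧
      ∃ c : ↥V, c ≠ 0 ∧
        ∃ g₁ : MvPolynomial (Fin 2) ↥V,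
          MvPolynomial.eval₂ V.subtype y g =
            (c : K') * MvPolynomial.eval₂ V.subtype
              (fun e => (y e - v e (j e)) / (v e (j e + 1) - v e (j e))) g₁ ∧
          (∃ d ∈ g₁.support, IsUnit (g₁.coeff d)) ∧
          (∀ d ∈ g₁.support, ∀ d' ∈ g₁.support, d ≠ 0 → d' ≠ 0 → d ≠ d' →
            V'.valuation ((g₁.coeff d : ↥V) : K') ≠ V'.valuation ((g₁.coeff d' : ↥V) : K')) :=
  lemma_ka0_general V' V K hVK hvr y hy1 lam hlam v hvV hpl hnpl g hdeg ν hν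
end
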